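/- arXiv:1505.06896 — 4 statements merged into one kernel-verified Lean document; each statement's English description precedes it below -/
import Mathlib

section
/- Let X ⊆ {d,t,4} and Y ⊆ {d,t,b,4,5}. If a full nested sequent Γ is provable in the system NCK + weak + cut + X^{↓} + Y•, then its corresponding formula fm(Γ) is provable in the Hilbert system HCK+X+Y. -/
/-! # Constructive modal logic: formulas and Hilbert systems -/

inductive Formula : Type
  | var : Nat → Formula
  | bot : Formula
  | and : Formula → Formula → Formula
  | or  : Formula → Formula → Formula
  | imp : Formula → Formula → Formula
  | box : Formula → Formula
  | dia : Formula → Formula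
  deriving DecidableEq

/-- ⊤ abbreviates ⊥⊃⊥ -/
def Formula.top : Formula := Formula.imp Formula.bot Formula.bot

/-- The five modal axioms d, t, b, 4, 5. -/
inductive Ax : Type
  | d | t | b | four | five
  deriving DecidableEq

/-- The formula scheme corresponding to each modal axiom. -/
def axForm : Ax → Formula → Formula
  | .d, A => Formula.imp (.box A) (.dia A)
  | .t, A => Formula.and (.imp A (.dia A)) (.imp (.box A) A)
  | .b, A => Formula.and (.imp A (.box (.dia A))) (.imp (.dia (.box A)) A)
  | .four, A => Formula.and (.imp (.dia (.dia A)) (.dia A)) (.imp (.box A) (.box (.box A)))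
  | .five, A => Formula.and (.imp (.dia A) (.box (.dia A))) (.imp (.dia (.box A)) (.box A))

/-- The Hilbert system HCK+X: a complete axiomatization of intuitionistic
propositional logic, plus k1 and k2, plus the modal axiom schemes in X,
closed under modus ponens and necessitation. -/
inductive Hck (X : Set Ax) : Formula → Prop
  | imp1 (A B : Formula) : Hck X (.imp A (.imp B A))
  | imp2 (A B C : Formula) :
      Hck X (.imp (.imp A (.imp B C)) (.imp (.imp A B) (.imp A C)))
  | andI (A B : Formula) : Hck X (.imp A (.imp B (.and A B)))
  | andE1 (A B : Formula) : Hck X (.imp (.and A B) A)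
  | andE2 (A B : Formula) : Hck X (.imp (.and A B) B)
  | orI1 (A B : Formula) : Hck X (.imp A (.or A B))
  | orI2 (A B : Formula) : Hck X (.imp B (.or A B))
  | orE (A B C : Formula) :
      Hck X (.imp (.imp A C) (.imp (.imp B C) (.imp (.or A B) C)))
  | exfalso (A : Formula) : Hck X (.imp .bot A)
  | k1 (A B : Formula) : Hck X (.imp (.box (.imp A B)) (.imp (.box A) (.box B)))
  | k2 (A B : Formula) : Hck X (.imp (.box (.imp A B)) (.imp (.dia A) (.dia B)))
  | ax {x : Ax} (A : Formula) : x ∈ X → Hck X (axForm x A)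
  | mp {A B : Formula} : Hck X (.imp A B) → Hck X A → Hck X B
  | nec {A : Formula} : Hck X A → Hck X (.box A)

/-! # Nested sequents -/

/-- LHS sequents: Φ ::= ∅ | A• | [Φ] | Φ,Φ -/
inductive LHS : Type
  | emp : LHS
  | fml : Formula → LHS
  | br : LHS → LHS
  | comma : LHS → LHS → LHS

/-- RHS sequents: Ψ ::= A∘ | [Φ,Ψ] -/
inductive RHS : Type
  | fml : Formula → RHS
  | br : LHS → RHS → RHS

/-- A full sequent: Φ,Ψ with exactly one output formula. -/
structure FullSeq where
  L : LHS
  R : RHS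

/-- Corresponding formula of an LHS sequent. -/
def LHS.fm : LHS → Formula
  | .emp => Formula.top
  | .fml A => A
  | .br Φ => Formula.dia Φ.fm
  | .comma Φ₁ Φ₂ => Formula.and Φ₁.fm Φ₂.fm

/-- Corresponding formula of an RHS sequent. -/
def RHS.fm : RHS → Formula
  | .fml A => A
  | .br Φ Ψ => Formula.box (Formula.imp Φ.fm Ψ.fm)

/-- Corresponding formula of a full sequent: fm(Φ,Ψ) = fm(Φ) ⊃ fm(Ψ). -/
def FullSeq.fm (S : FullSeq) : Formula := Formula.imp S.L.fm S.R.fm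

/-! # Contexts -/

/-- An output context: Γ₁•,[Γ₂•,[…,[Γₙ•,{ }]…]]. -/
inductive OutCtx : Type
  | hole : LHS → OutCtx
  | cons : LHS → OutCtx → OutCtx

/-- Filling an output context with an LHS sequent yields an LHS sequent. -/
def OutCtx.fillL : OutCtx → LHS → LHS
  | .hole Φ, Δ => Φ.comma Δ
  | .cons Φ C, Δ => Φ.comma (LHS.br (C.fillL Δ))

/-- Filling an output context with nothing (∅) yields an LHS sequent. -/
def OutCtx.fillE : OutCtx → LHS
  | .hole Φ => Φ
  | .cons Φ C => Φ.comma (LHS.br C.fillE)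

/-- Filling an output context with an RHS sequent yields a full sequent. -/
def OutCtx.fillR : OutCtx → RHS → FullSeq
  | .hole Φ, Ψ => ⟨Φ, Ψ⟩
  | .cons Φ C, Ψ => ⟨Φ, RHS.br (C.fillR Ψ).L (C.fillR Ψ).R⟩

/-- Filling an output context with a full sequent yields a full sequent. -/
def OutCtx.fillF : OutCtx → FullSeq → FullSeq
  | .hole Φ, S => ⟨Φ.comma S.L, S.R⟩
  | .cons Φ C, S => ⟨Φ, RHS.br (C.fillF S).L (C.fillF S).R⟩

/-- Depth of an output context: number of brackets around the hole. -/
def OutCtx.depth : OutCtx → Nat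
  | .hole _ => 0
  | .cons _ C => C.depth + 1

def OutCtx.addL : LHS → OutCtx → OutCtx
  | Φ, .hole Φ' => .hole (Φ.comma Φ')
  | Φ, .cons Φ' C => .cons (Φ.comma Φ') C

/-- Composition of output contexts (plugging one into the hole of the other). -/
def OutCtx.comp : OutCtx → OutCtx → OutCtx
  | .hole Φ, C => OutCtx.addL Φ C
  | .cons Φ C, C' => .cons Φ (C.comp C')

/-- An input context Γ'{Λ{ },Π∘} with Γ'{ }, Λ{ } output contexts, Π∘ an RHS
sequent.  Filled with an LHS sequent it yields a full sequent. -/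
structure InCtx where
  outer : OutCtx
  inner : OutCtx
  out : RHS

/-- Filling an input context with an LHS sequent. -/
def InCtx.fill (G : InCtx) (Δ : LHS) : FullSeq :=
  G.outer.fillF ⟨G.inner.fillL Δ, G.out⟩

/-- Output pruning Γ↓{ } = Γ'{Λ{ }} of an input context Γ'{Λ{ },Π∘}. -/
def InCtx.prune (G : InCtx) : OutCtx := G.outer.comp G.inner

/-- Depth of an input context. -/
def InCtx.depth (G : InCtx) : Nat := G.outer.depth + G.inner.depth

/-- [Φ]ⁿ : n brackets around an LHS sequent. -/
def LHS.brn : Nat → LHS → LHS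
  | 0, Φ => Φ
  | n+1, Φ => LHS.br (LHS.brn n Φ)

/-- [Σ]ⁿ : n brackets around a full sequent (as a full sequent). -/
def FullSeq.nest : Nat → FullSeq → FullSeq
  | 0, S => S
  | n+1, S => ⟨LHS.emp, RHS.br (FullSeq.nest n S).L (FullSeq.nest n S).R⟩

/-! # Equivalence of sequents (associativity/commutativity/unit of comma) -/

inductive SEqL : LHS → LHS → Prop
  | refl (Φ : LHS) : SEqL Φ Φ
  | symm {a b : LHS} : SEqL a b → SEqL b a
  | trans {a b c : LHS} : SEqL a b → SEqL b c → SEqL a c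
  | comm (a b : LHS) : SEqL (a.comma b) (b.comma a)
  | assoc (a b c : LHS) : SEqL ((a.comma b).comma c) (a.comma (b.comma c))
  | unit (a : LHS) : SEqL (LHS.emp.comma a) a
  | congComma {a a' b b' : LHS} : SEqL a a' → SEqL b b' → SEqL (a.comma b) (a'.comma b')
  | congBr {a a' : LHS} : SEqL a a' → SEqL a.br a'.br

inductive SEqR : RHS → RHS → Prop
  | refl (Ψ : RHS) : SEqR Ψ Ψ
  | symm {a b : RHS} : SEqR a b → SEqR b a
  | trans {a b c : RHS} : SEqR a b → SEqR b c → SEqR a c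
  | congBr {Φ Φ' : LHS} {Ψ Ψ' : RHS} :
      SEqL Φ Φ' → SEqR Ψ Ψ' → SEqR (RHS.br Φ Ψ) (RHS.br Φ' Ψ')

def SEq (S T : FullSeq) : Prop := SEqL S.L T.L ∧ SEqR S.R T.R

/-! # Inference rules -/

inductive RuleName : Type
  | id | botL | andL | andR | orL | orR | impL | impR
  | boxL | boxR | diaL | diaHatL | diaR | cont
  | weak | cut | nec
  | dDiaR | dBoxL | tDiaR | tBoxL | fourDiaR | fourBoxL
  | dSt | tSt | bSt | fourSt | fiveSt
  | s4R | s4L | s4Rdia | s4Lbox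
  | sbSt | s5St | s5bSt | sb5St
  deriving DecidableEq

/-- Rule instances: `Step r prems concl` means that inferring the full sequent
`concl` from the list of full sequents `prems` is an instance of the rule `r`. -/
inductive Step : RuleName → List FullSeq → FullSeq → Prop
  /- id: Γ{a•,a∘} -/
  | id (Γ : OutCtx) (a : Nat) :
      Step .id [] (Γ.fillF ⟨.fml (.var a), .fml (.var a)⟩)
  /- ⊥•: Γ{⊥•,Π∘} -/
  | botL (Γ : OutCtx) (Pn : RHS) :
      Step .botL [] (Γ.fillF ⟨.fml .bot, Pn⟩)
  /- ∧•: from Γ{A•,B•} infer Γ{(A∧B)•} -/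
  | andL (Γ : InCtx) (A B : Formula) :
      Step .andL [Γ.fill ((LHS.fml A).comma (.fml B))] (Γ.fill (.fml (A.and B)))
  /- ∧∘: from Γ{A∘} and Γ{B∘} infer Γ{(A∧B)∘} -/
  | andR (Γ : OutCtx) (A B : Formula) :
      Step .andR [Γ.fillR (.fml A), Γ.fillR (.fml B)] (Γ.fillR (.fml (A.and B)))
  /- ∨•: from Γ{A•,Π∘} and Γ{B•,Π∘} infer Γ{(A∨B)•,Π∘} -/
  | orL (Γ : OutCtx) (Pn : RHS) (A B : Formula) :
      Step .orL [Γ.fillF ⟨.fml A, Pn⟩, Γ.fillF ⟨.fml B, Pn⟩]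
        (Γ.fillF ⟨.fml (A.or B), Pn⟩)
  /- ∨∘: from Γ{A∘} (or Γ{B∘}) infer Γ{(A∨B)∘} -/
  | orR1 (Γ : OutCtx) (A B : Formula) :
      Step .orR [Γ.fillR (.fml A)] (Γ.fillR (.fml (A.or B)))
  | orR2 (Γ : OutCtx) (A B : Formula) :
      Step .orR [Γ.fillR (.fml B)] (Γ.fillR (.fml (A.or B)))
  /- ⊃•: from Γ↓{A∘} and Γ{B•} infer Γ{(A⊃B)•} -/
  | impL (Γ : InCtx) (A B : Formula) :
      Step .impL [Γ.prune.fillR (.fml A), Γ.fill (.fml B)] (Γ.fill (.fml (A.imp B)))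
  /- ⊃∘: from Γ{A•,B∘} infer Γ{(A⊃B)∘} -/
  | impR (Γ : OutCtx) (A B : Formula) :
      Step .impR [Γ.fillF ⟨.fml A, .fml B⟩] (Γ.fillR (.fml (A.imp B)))
  /- □•: from Γ{[A•,Δ]} infer Γ{(□A)•,[Δ]}, output elsewhere resp. in Δ -/
  | boxLIn (Γ : InCtx) (Δ : LHS) (A : Formula) :
      Step .boxL [Γ.fill (LHS.br ((LHS.fml A).comma Δ))]
        (Γ.fill ((LHS.fml A.box).comma Δ.br))
  | boxLOut (Γ : OutCtx) (Δ : FullSeq) (A : Formula) :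
      Step .boxL [Γ.fillR (.br ((LHS.fml A).comma Δ.L) Δ.R)]
        (Γ.fillF ⟨.fml A.box, .br Δ.L Δ.R⟩)
  /- □∘: from Γ{[A∘]} infer Γ{(□A)∘} -/
  | boxR (Γ : OutCtx) (A : Formula) :
      Step .boxR [Γ.fillR (.br .emp (.fml A))] (Γ.fillR (.fml A.box))
  /- ◇•: from Γ{[A•]} infer Γ{(◇A)•} -/
  | diaL (Γ : InCtx) (A : Formula) :
      Step .diaL [Γ.fill (LHS.br (.fml A))] (Γ.fill (.fml A.dia))
  /- ◇̂•: from Γ{[A•],Π∘} infer Γ{(◇A)•,Π∘} -/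
  | diaHatL (Γ : OutCtx) (Pn : RHS) (A : Formula) :
      Step .diaHatL [Γ.fillF ⟨LHS.br (.fml A), Pn⟩] (Γ.fillF ⟨.fml A.dia, Pn⟩)
  /- ◇∘: from Γ{[A∘,Δ]} infer Γ{(◇A)∘,[Δ]} -/
  | diaR (Γ : OutCtx) (Δ : LHS) (A : Formula) :
      Step .diaR [Γ.fillR (.br Δ (.fml A))] (Γ.fillF ⟨Δ.br, .fml A.dia⟩)
  /- cont: from Γ{Δ•,Δ•} infer Γ{Δ•} -/
  | cont (Γ : InCtx) (Δ : LHS) :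
      Step .cont [Γ.fill (Δ.comma Δ)] (Γ.fill Δ)
  /- weak: from Γ{∅} infer Γ{Δ•} -/
  | weak (Γ : InCtx) (Δ : LHS) :
      Step .weak [Γ.fill .emp] (Γ.fill Δ)
  /- cut: from Γ↓{A∘} and Γ{A•} infer Γ{∅} -/
  | cut (Γ : InCtx) (A : Formula) :
      Step .cut [Γ.prune.fillR (.fml A), Γ.fill (.fml A)] (Γ.fill .emp)
  /- nec: from Γ infer [Γ] -/
  | nec (S : FullSeq) :
      Step .nec [S] ⟨.emp, .br S.L S.R⟩
  /- ◇∘d: from Γ{[A∘]} infer Γ{(◇A)∘} -/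
  | dDiaR (Γ : OutCtx) (A : Formula) :
      Step .dDiaR [Γ.fillR (.br .emp (.fml A))] (Γ.fillR (.fml A.dia))
  /- □•d: from Γ{[A•]} infer Γ{(□A)•} -/
  | dBoxL (Γ : InCtx) (A : Formula) :
      Step .dBoxL [Γ.fill (LHS.br (.fml A))] (Γ.fill (.fml A.box))
  /- ◇∘t: from Γ{A∘} infer Γ{(◇A)∘} -/
  | tDiaR (Γ : OutCtx) (A : Formula) :
      Step .tDiaR [Γ.fillR (.fml A)] (Γ.fillR (.fml A.dia))
  /- □•t: from Γ{A•} infer Γ{(□A)•} -/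
  | tBoxL (Γ : InCtx) (A : Formula) :
      Step .tBoxL [Γ.fill (.fml A)] (Γ.fill (.fml A.box))
  /- ◇∘4: from Γ{[(◇A)∘,Δ]} infer Γ{(◇A)∘,[Δ]} -/
  | fourDiaR (Γ : OutCtx) (Δ : LHS) (A : Formula) :
      Step .fourDiaR [Γ.fillR (.br Δ (.fml A.dia))] (Γ.fillF ⟨Δ.br, .fml A.dia⟩)
  /- □•4: from Γ{[(□A)•,Δ]} infer Γ{(□A)•,[Δ]} -/
  | fourBoxLIn (Γ : InCtx) (Δ : LHS) (A : Formula) :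
      Step .fourBoxL [Γ.fill (LHS.br ((LHS.fml A.box).comma Δ))]
        (Γ.fill ((LHS.fml A.box).comma Δ.br))
  | fourBoxLOut (Γ : OutCtx) (Δ : FullSeq) (A : Formula) :
      Step .fourBoxL [Γ.fillR (.br ((LHS.fml A.box).comma Δ.L) Δ.R)]
        (Γ.fillF ⟨.fml A.box, .br Δ.L Δ.R⟩)
  /- d•: from Γ{[∅]} infer Γ{∅} -/
  | dSt (Γ : InCtx) :
      Step .dSt [Γ.fill (LHS.br .emp)] (Γ.fill .emp)
  /- t•: from Γ{[Σ]} infer Γ{Σ} -/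
  | tStIn (Γ : InCtx) (Sg : LHS) :
      Step .tSt [Γ.fill Sg.br] (Γ.fill Sg)
  | tStOut (Γ : OutCtx) (Sg : FullSeq) :
      Step .tSt [Γ.fillR (.br Sg.L Sg.R)] (Γ.fillF Sg)
  /- 4•: from Γ{[Σ]} infer Γ{[[Σ]]} -/
  | fourStIn (Γ : InCtx) (Sg : LHS) :
      Step .fourSt [Γ.fill Sg.br] (Γ.fill Sg.br.br)
  | fourStOut (Γ : OutCtx) (Sg : FullSeq) :
      Step .fourSt [Γ.fillR (.br Sg.L Sg.R)] (Γ.fillR (.br .emp (.br Sg.L Sg.R)))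
  /- b•: from Γ{[[Σ],Δ]} infer Γ{Σ,[Δ]} -/
  | bStIn (Γ : InCtx) (Sg Δ : LHS) :
      Step .bSt [Γ.fill (LHS.br (Sg.br.comma Δ))] (Γ.fill (Sg.comma Δ.br))
  | bStSig (Γ : OutCtx) (Sg : FullSeq) (Δ : LHS) :
      Step .bSt [Γ.fillR (.br Δ (.br Sg.L Sg.R))] (Γ.fillF ⟨Sg.L.comma Δ.br, Sg.R⟩)
  | bStDel (Γ : OutCtx) (Sg : LHS) (Δ : FullSeq) :
      Step .bSt [Γ.fillR (.br (Sg.br.comma Δ.L) Δ.R)] (Γ.fillF ⟨Sg, .br Δ.L Δ.R⟩)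
  /- 5•: from Γ{[[Σ],Δ]} infer Γ{[Σ],[Δ]} -/
  | fiveStIn (Γ : InCtx) (Sg Δ : LHS) :
      Step .fiveSt [Γ.fill (LHS.br (Sg.br.comma Δ))] (Γ.fill (Sg.br.comma Δ.br))
  | fiveStSig (Γ : OutCtx) (Sg : FullSeq) (Δ : LHS) :
      Step .fiveSt [Γ.fillR (.br Δ (.br Sg.L Sg.R))] (Γ.fillF ⟨Δ.br, .br Sg.L Sg.R⟩)
  | fiveStDel (Γ : OutCtx) (Sg : LHS) (Δ : FullSeq) :
      Step .fiveSt [Γ.fillR (.br (Sg.br.comma Δ.L) Δ.R)] (Γ.fillF ⟨Sg.br, .br Δ.L Δ.R⟩)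
  /- s4∘: from Γ{Δ{(◇A)∘}} infer Γ{(◇A)∘,Δ{∅}} -/
  | s4R (Γ Δ : OutCtx) (A : Formula) :
      Step .s4R [Γ.fillF (Δ.fillR (.fml A.dia))] (Γ.fillF ⟨Δ.fillE, .fml A.dia⟩)
  /- s4•: from Γ{Δ{(□A)•}} infer Γ{(□A)•,Δ{∅}} -/
  | s4LIn (Γ : InCtx) (Δ : OutCtx) (A : Formula) :
      Step .s4L [Γ.fill (Δ.fillL (.fml A.box))] (Γ.fill ((LHS.fml A.box).comma Δ.fillE))
  | s4LOut (Γ : OutCtx) (Δ : InCtx) (A : Formula) :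
      Step .s4L [Γ.fillF (Δ.fill (.fml A.box))]
        (Γ.fillF ⟨(LHS.fml A.box).comma (Δ.fill .emp).L, (Δ.fill .emp).R⟩)
  /- s4∘◇: from Γ{[Δ{A∘}]} infer Γ{(◇A)∘,[Δ{∅}]} -/
  | s4Rdia (Γ Δ : OutCtx) (A : Formula) :
      Step .s4Rdia [Γ.fillR (.br (Δ.fillR (.fml A)).L (Δ.fillR (.fml A)).R)]
        (Γ.fillF ⟨Δ.fillE.br, .fml A.dia⟩)
  /- s4•□: from Γ{[Δ{A•}]} infer Γ{(□A)•,[Δ{∅}]} -/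
  | s4LboxIn (Γ : InCtx) (Δ : OutCtx) (A : Formula) :
      Step .s4Lbox [Γ.fill (LHS.br (Δ.fillL (.fml A)))]
        (Γ.fill ((LHS.fml A.box).comma Δ.fillE.br))
  | s4LboxOut (Γ : OutCtx) (Δ : InCtx) (A : Formula) :
      Step .s4Lbox [Γ.fillR (.br (Δ.fill (.fml A)).L (Δ.fill (.fml A)).R)]
        (Γ.fillF ⟨.fml A.box, .br (Δ.fill .emp).L (Δ.fill .emp).R⟩)
  /- sb•: from Γ{Δ{[Σ]ⁿ}} infer Γ{Σ,Δ{∅}}, n the depth of Δ{ } -/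
  | sbStIn (Γ : InCtx) (Δ : OutCtx) (Sg : LHS) :
      Step .sbSt [Γ.fill (Δ.fillL (LHS.brn Δ.depth Sg))] (Γ.fill (Sg.comma Δ.fillE))
  | sbStMid (Γ : OutCtx) (Δ : InCtx) (Sg : LHS) :
      Step .sbSt [Γ.fillF (Δ.fill (LHS.brn Δ.depth Sg))]
        (Γ.fillF ⟨Sg.comma (Δ.fill .emp).L, (Δ.fill .emp).R⟩)
  | sbStOut (Γ Δ : OutCtx) (Sg : FullSeq) :
      Step .sbSt [Γ.fillF (Δ.fillF (FullSeq.nest Δ.depth Sg))]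
        (Γ.fillF ⟨Sg.L.comma Δ.fillE, Sg.R⟩)
  /- s5•: from Γ{Δ{[Σ]}} infer Γ{[Σ],Δ{∅}} -/
  | s5StIn (Γ : InCtx) (Δ : OutCtx) (Sg : LHS) :
      Step .s5St [Γ.fill (Δ.fillL Sg.br)] (Γ.fill (Sg.br.comma Δ.fillE))
  | s5StMid (Γ : OutCtx) (Δ : InCtx) (Sg : LHS) :
      Step .s5St [Γ.fillF (Δ.fill Sg.br)]
        (Γ.fillF ⟨Sg.br.comma (Δ.fill .emp).L, (Δ.fill .emp).R⟩)
  | s5StOut (Γ Δ : OutCtx) (Sg : FullSeq) :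
      Step .s5St [Γ.fillF (Δ.fillF ⟨.emp, .br Sg.L Sg.R⟩)]
        (Γ.fillF ⟨Δ.fillE, .br Sg.L Sg.R⟩)
  /- s5b•: from Γ{Δ{[Σ]ᵏ}} infer Γ{Σ,Δ{∅}}, 1 ≤ k ≤ depth of Δ{ } -/
  | s5bStIn (Γ : InCtx) (Δ : OutCtx) (Sg : LHS) (k : Nat)
      (h1 : 1 ≤ k) (h2 : k ≤ Δ.depth) :
      Step .s5bSt [Γ.fill (Δ.fillL (LHS.brn k Sg))] (Γ.fill (Sg.comma Δ.fillE))
  | s5bStMid (Γ : OutCtx) (Δ : InCtx) (Sg : LHS) (k : Nat)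
      (h1 : 1 ≤ k) (h2 : k ≤ Δ.depth) :
      Step .s5bSt [Γ.fillF (Δ.fill (LHS.brn k Sg))]
        (Γ.fillF ⟨Sg.comma (Δ.fill .emp).L, (Δ.fill .emp).R⟩)
  | s5bStOut (Γ Δ : OutCtx) (Sg : FullSeq) (k : Nat)
      (h1 : 1 ≤ k) (h2 : k ≤ Δ.depth) :
      Step .s5bSt [Γ.fillF (Δ.fillF (FullSeq.nest k Sg))]
        (Γ.fillF ⟨Sg.L.comma Δ.fillE, Sg.R⟩)
  /- sb5•: from Γ{Δ{[Σ]ᵏ}} infer Γ{[Σ],Δ{∅}}, 1 ≤ k ≤ depth of Δ{ } -/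
  | sb5StIn (Γ : InCtx) (Δ : OutCtx) (Sg : LHS) (k : Nat)
      (h1 : 1 ≤ k) (h2 : k ≤ Δ.depth) :
      Step .sb5St [Γ.fill (Δ.fillL (LHS.brn k Sg))] (Γ.fill (Sg.br.comma Δ.fillE))
  | sb5StMid (Γ : OutCtx) (Δ : InCtx) (Sg : LHS) (k : Nat)
      (h1 : 1 ≤ k) (h2 : k ≤ Δ.depth) :
      Step .sb5St [Γ.fillF (Δ.fill (LHS.brn k Sg))]
        (Γ.fillF ⟨Sg.br.comma (Δ.fill .emp).L, (Δ.fill .emp).R⟩)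
  | sb5StOut (Γ Δ : OutCtx) (Sg : FullSeq) (k : Nat)
      (h1 : 1 ≤ k) (h2 : k ≤ Δ.depth) :
      Step .sb5St [Γ.fillF (Δ.fillF (FullSeq.nest k Sg))]
        (Γ.fillF ⟨Δ.fillE, .br Sg.L Sg.R⟩)

/-! # Derivations -/

/-- `Deriv R n S`: the full sequent S has a derivation of height at most n
using the rules in R (sequents are treated up to AC-unit equivalence of
comma). -/
inductive Deriv (R : Set RuleName) : Nat → FullSeq → Prop
  | step {r : RuleName} {prems : List FullSeq} {S S' : FullSeq} {n : Nat} :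
      r ∈ R → Step r prems S → (∀ P ∈ prems, Deriv R n P) → SEq S S' →
      Deriv R (n+1) S'

/-- Provability in the system given by the rule set R. -/
def Provable (R : Set RuleName) (S : FullSeq) : Prop := ∃ n, Deriv R n S

/-- Derivations from a set of hypotheses (for derivability of rules). -/
inductive DerivFrom (R : Set RuleName) (H : Set FullSeq) : FullSeq → Prop
  | hyp {S S' : FullSeq} : S ∈ H → SEq S S' → DerivFrom R H S'
  | step {r : RuleName} {prems : List FullSeq} {S S' : FullSeq} :
      r ∈ R → Step r prems S → (∀ P ∈ prems, DerivFrom R H P) → SEq S S' →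
      DerivFrom R H S'

/-! # Rule sets -/

/-- The rules of NCK. -/
def NCKrules : Set RuleName :=
  {.id, .botL, .andL, .andR, .orL, .orR, .impL, .impR, .boxL, .boxR,
   .diaL, .diaR, .cont}

/-- The rules of NCK' (◇• replaced by ◇̂•). -/
def NCKP : Set RuleName :=
  {.id, .botL, .andL, .andR, .orL, .orR, .impL, .impR, .boxL, .boxR,
   .diaHatL, .diaR, .cont}

/-- X^{↓}: the logical ◇∘- and □•-rules for the axioms in X ⊆ {d,t,4}. -/
def lgRules (X : Set Ax) : Set RuleName := fun r =>
  (Ax.d ∈ X ∧ (r = .dDiaR ∨ r = .dBoxL)) ∨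
  (Ax.t ∈ X ∧ (r = .tDiaR ∨ r = .tBoxL)) ∨
  (Ax.four ∈ X ∧ (r = .fourDiaR ∨ r = .fourBoxL))

/-- The structural rule corresponding to a modal axiom. -/
def stRule : Ax → RuleName
  | .d => .dSt
  | .t => .tSt
  | .b => .bSt
  | .four => .fourSt
  | .five => .fiveSt

/-- Y•: the structural rules for the axioms in Y. -/
def stRules (Y : Set Ax) : Set RuleName := fun r => ∃ y ∈ Y, r = stRule y

/-- X^{↓}_s : the super variant of X^{↓}. -/
def lgRulesS (X : Set Ax) : Set RuleName := fun r =>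
  (r ∈ lgRules X ∧ r ≠ .fourDiaR ∧ r ≠ .fourBoxL) ∨
  (Ax.four ∈ X ∧ (r = .s4R ∨ r = .s4L ∨ r = .s4Rdia ∨ r = .s4Lbox))

/-- Y•_s : the super variant of Y•. -/
def stRulesS (Y : Set Ax) : Set RuleName := fun r =>
  (r ∈ stRules Y ∧ r ≠ .bSt ∧ r ≠ .fiveSt) ∨
  (Ax.b ∈ Y ∧ Ax.five ∉ Y ∧ r = .sbSt) ∨
  (Ax.five ∈ Y ∧ Ax.b ∉ Y ∧ r = .s5St) ∨
  (Ax.b ∈ Y ∧ Ax.five ∈ Y ∧ (r = .s5bSt ∨ r = .sb5St))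

/-- A safe pair of axiom sets. -/
def SafePair (X Y : Set Ax) : Prop :=
  X ⊆ {Ax.t, Ax.four} ∧ Y ⊆ {Ax.d, Ax.b, Ax.five} ∧
  (Ax.t ∈ X → Ax.five ∈ Y → Ax.b ∈ Y) ∧
  ((Ax.b ∈ Y ∨ Ax.five ∈ Y) → Ax.four ∈ X)

/-! Soundness is checked rule by rule. For an output context Γ, the formula of Γ{Σ} is
`Φ₁ ⊃ □(Φ₂ ⊃ □(… ⊃ fm Σ))`, monotone in `fm Σ` by k1 and necessitation; an input hole moreover
sits under `∧` and `◇` to the left of an implication, where it is antitone by k2. So a rule is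
sound as soon as its premise implies its conclusion locally, and for the modal rules this local
implication is k1, k2, or the axiom d, t, b, 4 or 5 that the rule is named after. For cut and ⊃•,
the pruned premise Γ↓{A∘} yields `A` under the same boxes as the input hole, and k2 carries it
into the `◇`s around that hole. -/

section Soundness

local infixr:60 " ⇒ " => Formula.imp
local infixr:68 " ⋏ " => Formula.and
local prefix:75 "□" => Formula.box
local prefix:75 "◇" => Formula.dia

namespace Hck

variable {X : Set Ax}

theorem imp_self (A : Formula) : Hck X (A ⇒ A) :=
  .mp (.mp (.imp2 A (A ⇒ A) A) (.imp1 A (A ⇒ A))) (.imp1 A A)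

theorem top : Hck X Formula.top := imp_self _

end Hck

/-- Derivability in HCK+X from local hypotheses, to which necessitation is not applied; this is
what makes the deduction theorem `HckFrom.intro` hold. -/
inductive HckFrom (X : Set Ax) (H : List Formula) : Formula → Prop
  | hyp {A : Formula} : A ∈ H → HckFrom X H A
  | thm {A : Formula} : Hck X A → HckFrom X H A
  | mp {A B : Formula} : HckFrom X H (A ⇒ B) → HckFrom X H A → HckFrom X H B

namespace HckFrom

variable {X : Set Ax} {H : List Formula} {A B C : Formula}

theorem intro (h : HckFrom X (A :: H) B) : HckFrom X H (A ⇒ B) := by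
  induction h with
  | hyp hC =>
    rcases List.mem_cons.1 hC with rfl | hC
    · exact .thm (Hck.imp_self _)
    · exact .mp (.thm (.imp1 _ _)) (.hyp hC)
  | thm h => exact .mp (.thm (.imp1 _ _)) (.thm h)
  | mp _ _ ih₁ ih₂ => exact .mp (.mp (.thm (.imp2 _ _ _)) ih₁) ih₂

theorem toHck (h : HckFrom X [] A) : Hck X A := by
  induction h with
  | hyp h => cases h
  | thm h => exact h
  | mp _ _ ih₁ ih₂ => exact .mp ih₁ ih₂

theorem hyp0 : HckFrom X (A :: H) A := .hyp (.head _)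

theorem hyp1 : HckFrom X (B :: A :: H) A := .hyp (.tail _ (.head _))

theorem hyp2 : HckFrom X (C :: B :: A :: H) A := .hyp (.tail _ (.tail _ (.head _)))

theorem and_left (h : HckFrom X H (A ⋏ B)) : HckFrom X H A := .mp (.thm (.andE1 _ _)) h

theorem and_right (h : HckFrom X H (A ⋏ B)) : HckFrom X H B := .mp (.thm (.andE2 _ _)) h

theorem and_intro (hA : HckFrom X H A) (hB : HckFrom X H B) : HckFrom X H (A ⋏ B) :=
  .mp (.mp (.thm (.andI _ _)) hA) hB

end HckFrom

namespace Hck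

variable {X : Set Ax} {A A' B B' C D : Formula}

theorem imp_trans (h₁ : Hck X (A ⇒ B)) (h₂ : Hck X (B ⇒ C)) : Hck X (A ⇒ C) :=
  HckFrom.toHck <| .intro <| .mp (.thm h₂) (.mp (.thm h₁) .hyp0)

theorem imp_congr (h₁ : Hck X (A' ⇒ A)) (h₂ : Hck X (B ⇒ B')) : Hck X ((A ⇒ B) ⇒ A' ⇒ B') :=
  HckFrom.toHck <| .intro <| .intro <| .mp (.thm h₂) (.mp .hyp1 (.mp (.thm h₁) .hyp0))

theorem imp_congr_right (h : Hck X (B ⇒ B')) : Hck X ((A ⇒ B) ⇒ A ⇒ B') :=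
  imp_congr (imp_self A) h

theorem and_imp_iff_imp_imp :
    Hck X (((A ⋏ B) ⇒ C) ⇒ A ⇒ B ⇒ C) ∧ Hck X ((A ⇒ B ⇒ C) ⇒ (A ⋏ B) ⇒ C) :=
  ⟨HckFrom.toHck <| .intro <| .intro <| .intro <| .mp .hyp2 (.and_intro .hyp1 .hyp0),
   HckFrom.toHck <| .intro <| .intro <| .mp (.mp .hyp1 (.and_left .hyp0)) (.and_right .hyp0)⟩

theorem box_mono (h : Hck X (A ⇒ B)) : Hck X (□A ⇒ □B) := .mp (.k1 _ _) (.nec h)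

theorem dia_mono (h : Hck X (A ⇒ B)) : Hck X (◇A ⇒ ◇B) := .mp (.k2 _ _) (.nec h)

theorem box_mono₂ (h : Hck X (A ⇒ B ⇒ C)) : Hck X (□A ⇒ □B ⇒ □C) :=
  (box_mono h).imp_trans (.k1 _ _)

theorem box_dia_mono₂ (h : Hck X (A ⇒ B ⇒ C)) : Hck X (□A ⇒ ◇B ⇒ ◇C) :=
  (box_mono h).imp_trans (.k2 _ _)

theorem box_top_imp : Hck X (□(Formula.top ⇒ A) ⇒ □A) :=
  box_mono <| HckFrom.toHck <| .intro <| .mp .hyp0 (.thm top)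

theorem and_dia_imp_dia_and (h : Hck X (C ⇒ □A)) : Hck X ((C ⋏ ◇B) ⇒ ◇(A ⋏ B)) :=
  HckFrom.toHck <| .intro <| .mp
    (.mp (.thm (box_dia_mono₂ (.andI _ _))) (.mp (.thm h) (.and_left .hyp0))) (.and_right .hyp0)

theorem box_and_imp_imp_box (h : Hck X (C ⇒ □A)) : Hck X (□((A ⋏ B) ⇒ D) ⇒ C ⇒ □(B ⇒ D)) :=
  HckFrom.toHck <| .intro <| .intro <|
    .mp (.mp (.thm (box_mono₂ and_imp_iff_imp_imp.1)) .hyp1) (.mp (.thm h) .hyp0)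

theorem box_imp_dia_imp (h : Hck X (◇B ⇒ C)) : Hck X (□(A ⇒ B) ⇒ ◇A ⇒ C) :=
  HckFrom.toHck <| .intro <| .intro <| .mp (.thm h) (.mp (.mp (.thm (.k2 _ _)) .hyp1) .hyp0)

theorem ax_d (h : Ax.d ∈ X) : Hck X (□A ⇒ ◇A) := ax (x := .d) A h

theorem ax_t_dia (h : Ax.t ∈ X) : Hck X (A ⇒ ◇A) := .mp (.andE1 _ _) (ax (x := .t) A h)

theorem ax_t_box (h : Ax.t ∈ X) : Hck X (□A ⇒ A) := .mp (.andE2 _ _) (ax (x := .t) A h)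

theorem ax_b_dia (h : Ax.b ∈ X) : Hck X (A ⇒ □◇A) := .mp (.andE1 _ _) (ax (x := .b) A h)

theorem ax_b_box (h : Ax.b ∈ X) : Hck X (◇□A ⇒ A) := .mp (.andE2 _ _) (ax (x := .b) A h)

theorem ax_four_dia (h : Ax.four ∈ X) : Hck X (◇◇A ⇒ ◇A) :=
  .mp (.andE1 _ _) (ax (x := .four) A h)

theorem ax_four_box (h : Ax.four ∈ X) : Hck X (□A ⇒ □□A) :=
  .mp (.andE2 _ _) (ax (x := .four) A h)

theorem ax_five_dia (h : Ax.five ∈ X) : Hck X (◇A ⇒ □◇A) :=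
  .mp (.andE1 _ _) (ax (x := .five) A h)

theorem ax_five_box (h : Ax.five ∈ X) : Hck X (◇□A ⇒ □A) :=
  .mp (.andE2 _ _) (ax (x := .five) A h)

end Hck

namespace SEqL

variable {X : Set Ax}

theorem fm_interderivable {a b : LHS} (h : SEqL a b) :
    Hck X (a.fm ⇒ b.fm) ∧ Hck X (b.fm ⇒ a.fm) := by
  induction h with
  | refl a => exact ⟨Hck.imp_self _, Hck.imp_self _⟩
  | symm _ ih => exact ih.symm
  | trans _ _ ih₁ ih₂ => exact ⟨ih₁.1.imp_trans ih₂.1, ih₂.2.imp_trans ih₁.2⟩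
  | comm a b =>
    constructor <;>
      exact HckFrom.toHck (.intro (.and_intro (.and_right .hyp0) (.and_left .hyp0)))
  | assoc a b c =>
    constructor
    · exact HckFrom.toHck <| .intro <| .and_intro (.and_left (.and_left .hyp0))
        (.and_intro (.and_right (.and_left .hyp0)) (.and_right .hyp0))
    · exact HckFrom.toHck <| .intro <| .and_intro
        (.and_intro (.and_left .hyp0) (.and_left (.and_right .hyp0)))
        (.and_right (.and_right .hyp0))
  | unit a => exact ⟨.andE2 _ _, HckFrom.toHck (.intro (.and_intro (.thm Hck.top) .hyp0))⟩
  | congComma _ _ ih₁ ih₂ =>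
    constructor <;> refine HckFrom.toHck <| .intro <| .and_intro ?_ ?_
    exacts [.mp (.thm ih₁.1) (.and_left .hyp0), .mp (.thm ih₂.1) (.and_right .hyp0),
      .mp (.thm ih₁.2) (.and_left .hyp0), .mp (.thm ih₂.2) (.and_right .hyp0)]
  | congBr _ ih => exact ⟨Hck.dia_mono ih.1, Hck.dia_mono ih.2⟩

end SEqL

theorem SEqR.fm_interderivable {X : Set Ax} {a b : RHS} (h : SEqR a b) :
    Hck X (a.fm ⇒ b.fm) ∧ Hck X (b.fm ⇒ a.fm) := by
  induction h with
  | refl a => exact ⟨Hck.imp_self _, Hck.imp_self _⟩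
  | symm _ ih => exact ih.symm
  | trans _ _ ih₁ ih₂ => exact ⟨ih₁.1.imp_trans ih₂.1, ih₂.2.imp_trans ih₁.2⟩
  | congBr hL _ ih =>
    obtain ⟨hl₁, hl₂⟩ := hL.fm_interderivable (X := X)
    exact ⟨Hck.box_mono (Hck.imp_congr hl₂ ih.1), Hck.box_mono (Hck.imp_congr hl₁ ih.2)⟩

theorem SEq.hck_fm {X : Set Ax} {S T : FullSeq} (h : SEq S T) (hS : Hck X S.fm) : Hck X T.fm :=
  .mp (Hck.imp_congr (h.1.fm_interderivable.2) (h.2.fm_interderivable.1)) hS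

namespace OutCtx

variable {X : Set Ax} {p q s l l' : Formula}

def fmR : OutCtx → Formula → Formula
  | .hole Φ, p => Φ.fm ⇒ p
  | .cons Φ C, p => Φ.fm ⇒ □(C.fmR p)

def fmL : OutCtx → Formula → Formula
  | .hole Φ, l => Φ.fm ⋏ l
  | .cons Φ C, l => Φ.fm ⋏ ◇(C.fmL l)

theorem fm_fillR (C : OutCtx) (Ψ : RHS) : (C.fillR Ψ).fm = C.fmR Ψ.fm := by
  induction C with
  | hole Φ => rfl
  | cons Φ C ih => exact congrArg (fun f => Φ.fm ⇒ □f) ih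

theorem fm_fillL (C : OutCtx) (Δ : LHS) : (C.fillL Δ).fm = C.fmL Δ.fm := by
  induction C with
  | hole Φ => rfl
  | cons Φ C ih => exact congrArg (fun f => Φ.fm ⋏ ◇f) ih

theorem hck_fmR (C : OutCtx) (h : Hck X p) : Hck X (C.fmR p) := by
  induction C with
  | hole Φ => exact .mp (.imp1 _ _) h
  | cons Φ C ih => exact .mp (.imp1 _ _) (.nec ih)

theorem fmR_mono (C : OutCtx) (h : Hck X (p ⇒ q)) : Hck X (C.fmR p ⇒ C.fmR q) := by
  induction C with
  | hole Φ => exact Hck.imp_congr_right h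
  | cons Φ C ih => exact Hck.imp_congr_right (Hck.box_mono ih)

theorem fmR_mono₂ (C : OutCtx) (h : Hck X (p ⇒ q ⇒ s)) :
    Hck X (C.fmR p ⇒ C.fmR q ⇒ C.fmR s) := by
  suffices ∀ {Φ p' q' s'}, Hck X (p' ⇒ q' ⇒ s') → Hck X ((Φ ⇒ p') ⇒ (Φ ⇒ q') ⇒ Φ ⇒ s') by
    induction C with
    | hole Φ => exact this h
    | cons Φ C ih => exact this (Hck.box_mono₂ ih)
  intro Φ p' q' s' h'
  exact HckFrom.toHck <| .intro <| .intro <| .intro <|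
    .mp (.mp (.thm h') (.mp .hyp2 .hyp0)) (.mp .hyp1 .hyp0)

theorem fm_fillF_interderivable (C : OutCtx) (S : FullSeq) :
    Hck X ((C.fillF S).fm ⇒ C.fmR S.fm) ∧ Hck X (C.fmR S.fm ⇒ (C.fillF S).fm) := by
  induction C with
  | hole Φ => exact Hck.and_imp_iff_imp_imp
  | cons Φ C ih =>
    exact ⟨Hck.imp_congr_right (Hck.box_mono ih.1), Hck.imp_congr_right (Hck.box_mono ih.2)⟩

theorem hck_fillF_iff (C : OutCtx) (S : FullSeq) :
    Hck X (C.fillF S).fm ↔ Hck X (C.fmR S.fm) :=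
  ⟨(C.fm_fillF_interderivable S).1.mp, (C.fm_fillF_interderivable S).2.mp⟩

theorem fillR_of_imp (C : OutCtx) {Ψ Ψ' : RHS} (hC : Hck X (C.fillR Ψ).fm)
    (h : Hck X (Ψ.fm ⇒ Ψ'.fm)) : Hck X (C.fillR Ψ').fm := by
  rw [fm_fillR] at hC ⊢
  exact (C.fmR_mono h).mp hC

theorem fillF_of_imp (C : OutCtx) {Ψ : RHS} {S : FullSeq} (hC : Hck X (C.fillR Ψ).fm)
    (h : Hck X (Ψ.fm ⇒ S.fm)) : Hck X (C.fillF S).fm := by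
  rw [fm_fillR] at hC
  exact (C.hck_fillF_iff S).2 ((C.fmR_mono h).mp hC)

theorem fmL_mono (C : OutCtx) (h : Hck X (l ⇒ l')) : Hck X (C.fmL l ⇒ C.fmL l') := by
  suffices ∀ {Φ m m'}, Hck X (m ⇒ m') → Hck X ((Φ ⋏ m) ⇒ Φ ⋏ m') by
    induction C with
    | hole Φ => exact this h
    | cons Φ C ih => exact this (Hck.dia_mono ih)
  intro Φ m m' h'
  exact HckFrom.toHck <| .intro <|
    .and_intro (.and_left .hyp0) (.mp (.thm h') (.and_right .hyp0))

theorem fmR_imp_fmL_imp {A : Formula} (C : OutCtx) (h : Hck X (A ⇒ l' ⇒ l)) :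
    Hck X (C.fmR A ⇒ C.fmL l' ⇒ C.fmL l) := by
  suffices ∀ {Φ a m' m}, Hck X (a ⇒ m' ⇒ m) → Hck X ((Φ ⇒ a) ⇒ (Φ ⋏ m') ⇒ Φ ⋏ m) by
    induction C with
    | hole Φ => exact this h
    | cons Φ C ih => exact this (Hck.box_dia_mono₂ ih)
  intro Φ a m' m h'
  exact HckFrom.toHck <| .intro <| .intro <| .and_intro (.and_left .hyp0)
    (.mp (.mp (.thm h') (.mp .hyp1 (.and_left .hyp0))) (.and_right .hyp0))

theorem fmR_comp (Co Ci : OutCtx) (p : Formula) :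
    Hck X ((Co.comp Ci).fmR p ⇒ Co.fmR (Ci.fmR p)) := by
  induction Co with
  | hole Φ => cases Ci <;> exact Hck.and_imp_iff_imp_imp.1
  | cons Φ C ih => exact Hck.imp_congr_right (Hck.box_mono ih)

end OutCtx

namespace InCtx

variable {X : Set Ax}

theorem hck_fill_iff (G : InCtx) (Δ : LHS) :
    Hck X (G.fill Δ).fm ↔ Hck X (G.outer.fmR (G.inner.fmL Δ.fm ⇒ G.out.fm)) := by
  rw [fill, OutCtx.hck_fillF_iff, FullSeq.fm, OutCtx.fm_fillL]

theorem fill_of_imp (G : InCtx) {Δ Δ' : LHS} (hG : Hck X (G.fill Δ).fm)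
    (h : Hck X (Δ'.fm ⇒ Δ.fm)) : Hck X (G.fill Δ').fm := by
  rw [hck_fill_iff] at hG ⊢
  exact (G.outer.fmR_mono (Hck.imp_congr (G.inner.fmL_mono h) (Hck.imp_self _))).mp hG

theorem fill_of_prune (G : InCtx) {A : Formula} {Δ Δ' : LHS}
    (hA : Hck X (G.prune.fillR (.fml A)).fm) (hG : Hck X (G.fill Δ).fm)
    (h : Hck X (A ⇒ Δ'.fm ⇒ Δ.fm)) : Hck X (G.fill Δ').fm := by
  rw [OutCtx.fm_fillR, prune] at hA
  rw [hck_fill_iff] at hG ⊢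
  have hloc : Hck X
      (G.inner.fmR A ⇒ (G.inner.fmL Δ.fm ⇒ G.out.fm) ⇒ G.inner.fmL Δ'.fm ⇒ G.out.fm) :=
    HckFrom.toHck <| .intro <| .intro <| .intro <|
      .mp .hyp1 (.mp (.mp (.thm (G.inner.fmR_imp_fmL_imp h)) .hyp2) .hyp0)
  exact ((G.outer.fmR_mono₂ hloc).mp ((OutCtx.fmR_comp _ _ _).mp hA)).mp hG

end InCtx

def RuleSound (Z : Set Ax) (r : RuleName) : Prop :=
  ∀ ⦃prems : List FullSeq⦄ ⦃S : FullSeq⦄,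
    Step r prems S → (∀ P ∈ prems, Hck Z P.fm) → Hck Z S.fm

namespace RuleSound

variable {Z : Set Ax}

theorem id : RuleSound Z .id
  | _, _, .id Γ _, _ => (Γ.hck_fillF_iff _).2 (Γ.hck_fmR (Hck.imp_self _))

theorem botL : RuleSound Z .botL
  | _, _, .botL Γ _, _ => (Γ.hck_fillF_iff _).2 (Γ.hck_fmR (.exfalso _))

theorem andL : RuleSound Z .andL
  | _, _, .andL G A B, ih => G.fill_of_imp (ih _ (.head _)) (Hck.imp_self (A ⋏ B))

theorem andR : RuleSound Z .andR
  | _, _, .andR Γ A B, ih => by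
    have h₁ := ih _ (.head _)
    have h₂ := ih _ (.tail _ (.head _))
    rw [OutCtx.fm_fillR] at h₁ h₂ ⊢
    exact ((Γ.fmR_mono₂ (.andI A B)).mp h₁).mp h₂

theorem orL : RuleSound Z .orL
  | _, _, .orL Γ Pn A B, ih => by
    have h₁ := ih _ (.head _)
    have h₂ := ih _ (.tail _ (.head _))
    rw [OutCtx.hck_fillF_iff] at h₁ h₂ ⊢
    exact ((Γ.fmR_mono₂ (.orE A B Pn.fm)).mp h₁).mp h₂

theorem orR : RuleSound Z .orR
  | _, _, .orR1 Γ A B, ih => Γ.fillR_of_imp (ih _ (.head _)) (.orI1 A B)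
  | _, _, .orR2 Γ A B, ih => Γ.fillR_of_imp (ih _ (.head _)) (.orI2 A B)

theorem impL : RuleSound Z .impL
  | _, _, .impL G A B, ih =>
    have modusPonens : Hck Z (A ⇒ (A ⇒ B) ⇒ B) :=
      HckFrom.toHck <| .intro <| .intro <| .mp .hyp0 .hyp1
    G.fill_of_prune (ih _ (.head _)) (ih _ (.tail _ (.head _))) modusPonens

theorem impR : RuleSound Z .impR
  | _, _, .impR Γ _ _, ih => by
    rw [OutCtx.fm_fillR]
    exact (Γ.hck_fillF_iff _).1 (ih _ (.head _))

theorem boxL : RuleSound Z .boxL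
  | _, _, .boxLIn G _ _, ih =>
    G.fill_of_imp (ih _ (.head _)) (Hck.and_dia_imp_dia_and (Hck.imp_self _))
  | _, _, .boxLOut Γ _ _, ih =>
    Γ.fillF_of_imp (ih _ (.head _)) (Hck.box_and_imp_imp_box (Hck.imp_self _))

theorem boxR : RuleSound Z .boxR
  | _, _, .boxR Γ _, ih => Γ.fillR_of_imp (ih _ (.head _)) Hck.box_top_imp

theorem diaL : RuleSound Z .diaL
  | _, _, .diaL G A, ih => G.fill_of_imp (ih _ (.head _)) (Hck.imp_self (◇A))

theorem diaR : RuleSound Z .diaR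
  | _, _, .diaR Γ _ _, ih => Γ.fillF_of_imp (ih _ (.head _)) (.k2 _ _)

theorem cont : RuleSound Z .cont
  | _, _, .cont G _, ih =>
    G.fill_of_imp (ih _ (.head _)) (HckFrom.toHck (.intro (.and_intro .hyp0 .hyp0)))

theorem weak : RuleSound Z .weak
  | _, _, .weak G _, ih => G.fill_of_imp (ih _ (.head _)) (.mp (.imp1 _ _) Hck.top)

theorem cut : RuleSound Z .cut
  | _, _, .cut G _, ih => G.fill_of_prune (ih _ (.head _)) (ih _ (.tail _ (.head _))) (.imp1 _ _)

theorem dDiaR (hd : Ax.d ∈ Z) : RuleSound Z .dDiaR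
  | _, _, .dDiaR Γ _, ih =>
    Γ.fillR_of_imp (ih _ (.head _)) (Hck.box_top_imp.imp_trans (Hck.ax_d hd))

theorem dBoxL (hd : Ax.d ∈ Z) : RuleSound Z .dBoxL
  | _, _, .dBoxL G _, ih => G.fill_of_imp (ih _ (.head _)) (Hck.ax_d hd)

theorem tDiaR (ht : Ax.t ∈ Z) : RuleSound Z .tDiaR
  | _, _, .tDiaR Γ _, ih => Γ.fillR_of_imp (ih _ (.head _)) (Hck.ax_t_dia ht)

theorem tBoxL (ht : Ax.t ∈ Z) : RuleSound Z .tBoxL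
  | _, _, .tBoxL G _, ih => G.fill_of_imp (ih _ (.head _)) (Hck.ax_t_box ht)

theorem fourDiaR (h4 : Ax.four ∈ Z) : RuleSound Z .fourDiaR
  | _, _, .fourDiaR Γ _ _, ih =>
    Γ.fillF_of_imp (ih _ (.head _)) (Hck.box_imp_dia_imp (Hck.ax_four_dia h4))

theorem fourBoxL (h4 : Ax.four ∈ Z) : RuleSound Z .fourBoxL
  | _, _, .fourBoxLIn G _ _, ih =>
    G.fill_of_imp (ih _ (.head _)) (Hck.and_dia_imp_dia_and (Hck.ax_four_box h4))
  | _, _, .fourBoxLOut Γ _ _, ih =>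
    Γ.fillF_of_imp (ih _ (.head _)) (Hck.box_and_imp_imp_box (Hck.ax_four_box h4))

theorem dSt (hd : Ax.d ∈ Z) : RuleSound Z .dSt
  | _, _, .dSt G, ih =>
    G.fill_of_imp (ih _ (.head _)) (.mp (.imp1 _ _) (.mp (Hck.ax_d hd) (.nec Hck.top)))

theorem tSt (ht : Ax.t ∈ Z) : RuleSound Z .tSt
  | _, _, .tStIn G _, ih => G.fill_of_imp (ih _ (.head _)) (Hck.ax_t_dia ht)
  | _, _, .tStOut Γ _, ih => Γ.fillF_of_imp (ih _ (.head _)) (Hck.ax_t_box ht)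

theorem fourSt (h4 : Ax.four ∈ Z) : RuleSound Z .fourSt
  | _, _, .fourStIn G _, ih => G.fill_of_imp (ih _ (.head _)) (Hck.ax_four_dia h4)
  | _, _, .fourStOut Γ _, ih =>
    Γ.fillR_of_imp (ih _ (.head _)) ((Hck.ax_four_box h4).imp_trans (Hck.box_mono (.imp1 _ _)))

theorem bSt (hb : Ax.b ∈ Z) : RuleSound Z .bSt
  | _, _, .bStIn G _ _, ih =>
    G.fill_of_imp (ih _ (.head _)) (Hck.and_dia_imp_dia_and (Hck.ax_b_dia hb))
  | _, _, .bStSig Γ Sg Δ, ih =>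
    have hloc : Hck Z (□(Δ.fm ⇒ □Sg.fm) ⇒ (Sg.L.fm ⋏ ◇Δ.fm) ⇒ Sg.R.fm) :=
      (Hck.box_imp_dia_imp (Hck.ax_b_box hb)).imp_trans <| HckFrom.toHck <| .intro <| .intro <|
        .mp (.mp .hyp1 (.and_right .hyp0)) (.and_left .hyp0)
    Γ.fillF_of_imp (ih _ (.head _)) hloc
  | _, _, .bStDel Γ _ _, ih =>
    Γ.fillF_of_imp (ih _ (.head _)) (Hck.box_and_imp_imp_box (Hck.ax_b_dia hb))

theorem fiveSt (h5 : Ax.five ∈ Z) : RuleSound Z .fiveSt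
  | _, _, .fiveStIn G _ _, ih =>
    G.fill_of_imp (ih _ (.head _)) (Hck.and_dia_imp_dia_and (Hck.ax_five_dia h5))
  | _, _, .fiveStSig Γ _ _, ih =>
    Γ.fillF_of_imp (ih _ (.head _)) (Hck.box_imp_dia_imp (Hck.ax_five_box h5))
  | _, _, .fiveStDel Γ _ _, ih =>
    Γ.fillF_of_imp (ih _ (.head _)) (Hck.box_and_imp_imp_box (Hck.ax_five_dia h5))

end RuleSound

theorem RuleSound.of_mem_NCKrules {Z : Set Ax} {r : RuleName} (hr : r ∈ NCKrules) :
    RuleSound Z r := by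
  rcases hr with rfl | rfl | rfl | rfl | rfl | rfl | rfl | rfl | rfl | rfl | rfl | rfl | rfl
  exacts [id, botL, andL, andR, orL, orR, impL, impR, boxL, boxR, diaL, diaR, cont]

theorem RuleSound.of_mem_lgRules {X Z : Set Ax} {r : RuleName} (hr : r ∈ lgRules X)
    (hXZ : X ⊆ Z) : RuleSound Z r := by
  rcases hr with ⟨hd, rfl | rfl⟩ | ⟨ht, rfl | rfl⟩ | ⟨h4, rfl | rfl⟩
  exacts [dDiaR (hXZ hd), dBoxL (hXZ hd), tDiaR (hXZ ht), tBoxL (hXZ ht), fourDiaR (hXZ h4),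
    fourBoxL (hXZ h4)]

theorem RuleSound.of_mem_stRules {Y Z : Set Ax} {r : RuleName} (hr : r ∈ stRules Y)
    (hYZ : Y ⊆ Z) : RuleSound Z r := by
  obtain ⟨y, hy, rfl⟩ := hr
  cases y
  exacts [dSt (hYZ hy), tSt (hYZ hy), bSt (hYZ hy), fourSt (hYZ hy), fiveSt (hYZ hy)]

theorem Provable.hck_fm {R : Set RuleName} {Z : Set Ax} (hR : ∀ r ∈ R, RuleSound Z r)
    {S : FullSeq} (h : Provable R S) : Hck Z S.fm := by
  obtain ⟨n, hS⟩ := h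
  induction hS with
  | step hr hs _ hseq ih => exact hseq.hck_fm (hR _ hr hs ih)

end Soundness

theorem statement0_general (X Y : Set Ax)
    (Γ : FullSeq)
    (h : Provable (NCKrules ∪ {RuleName.weak, RuleName.cut} ∪ lgRules X ∪ stRules Y) Γ) :
    Hck (X ∪ Y) Γ.fm := by
  refine h.hck_fm fun r hr => ?_
  rcases hr with ((hNCK | rfl | rfl) | hlg) | hst
  · exact .of_mem_NCKrules hNCK
  · exact .weak
  · exact .cut
  · exact .of_mem_lgRules hlg Set.subset_union_left
  · exact .of_mem_stRules hst Set.subset_union_right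

/-- Soundness, Theorem 4.1(ii): if a full nested sequent Γ is
provable in NCK + weak + cut + X^{↓} + Y•, then fm(Γ) is provable in HCK+X+Y. -/
theorem statement0 (X Y : Set Ax)
    (hX : X ⊆ {Ax.d, Ax.t, Ax.four})
    (hY : Y ⊆ {Ax.d, Ax.t, Ax.b, Ax.four, Ax.five})
    (Γ : FullSeq)
    (h : Provable (NCKrules ∪ {RuleName.weak, RuleName.cut} ∪ lgRules X ∪ stRules Y) Γ) :
    Hck (X ∪ Y) Γ.fm :=
  statement0_general X Y Γ h
end

section
/- Let X ⊆ {d,t,b,4,5}, let Γ{ } be an output context, a a propositional variable, and Π∘ an RHS sequent. Then the formulas fm(Γ{a•,a∘}) and fm(Γ{⊥•,Π∘}) are provable in HCK+X. -/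
lemma hck_const {X : Set Ax} {B : Formula} (A : Formula) (h : Hck X B) :
    Hck X (A.imp B) := Hck.mp (Hck.imp1 B A) h

lemma hck_comp {X : Set Ax} {A B C : Formula}
    (h1 : Hck X (A.imp B)) (h2 : Hck X (B.imp C)) : Hck X (A.imp C) :=
  Hck.mp (Hck.mp (Hck.imp2 A B C) (hck_const A h2)) h1

lemma hck_imp_self {X : Set Ax} (A : Formula) : Hck X (A.imp A) :=
  Hck.mp (Hck.mp (Hck.imp2 A (Formula.imp A A) A) (Hck.imp1 A (A.imp A)))
    (Hck.imp1 A A)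

lemma hck_fillF {X : Set Ax} (Γ : OutCtx) (S : FullSeq)
    (h : Hck X S.fm) : Hck X (Γ.fillF S).fm := by
  induction Γ generalizing S with
  | hole Φ =>
      exact hck_comp (Hck.andE2 Φ.fm S.L.fm) h
  | cons Φ C ih =>
      exact hck_const _ (Hck.nec (ih S h))

/-- Lemma 4.2: for any output context Γ{ }, propositional
variable a, and RHS sequent Π∘, the formulas fm(Γ{a•,a∘}) and fm(Γ{⊥•,Π∘})
are provable in HCK+X. -/
theorem statement4 (X : Set Ax) (Γ : OutCtx) (a : Nat) (Pn : RHS) :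
    Hck X (FullSeq.fm (Γ.fillF ⟨.fml (.var a), .fml (.var a)⟩)) ∧
    Hck X (FullSeq.fm (Γ.fillF ⟨.fml .bot, Pn⟩)) :=
  ⟨hck_fillF Γ _ (hck_imp_self _), hck_fillF Γ _ (Hck.exfalso _)⟩
end

section
/- Let X ⊆ {d,t,b,4,5}, let Δ and Σ be full sequents, and let Γ{ } be an output context. If fm(Δ)⊃fm(Σ) is provable in HCK+X, then so is fm(Γ{Δ})⊃fm(Γ{Σ}). -/
/-! Auxiliary: derivations from hypotheses and the deduction theorem. -/

inductive Hd (X : Set Ax) (Γ : List Formula) : Formula → Prop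
  | hyp {A : Formula} : A ∈ Γ → Hd X Γ A
  | thm {A : Formula} : Hck X A → Hd X Γ A
  | mp {A B : Formula} : Hd X Γ (A.imp B) → Hd X Γ A → Hd X Γ B

theorem Hck.impRefl (X : Set Ax) (A : Formula) : Hck X (A.imp A) :=
  Hck.mp (Hck.mp (Hck.imp2 A (A.imp A) A) (Hck.imp1 A (A.imp A))) (Hck.imp1 A A)

theorem Hd.ded {X : Set Ax} {Γ : List Formula} {A B : Formula}
    (h : Hd X (A :: Γ) B) : Hd X Γ (A.imp B) := by
  induction h with
  | hyp hm =>
    rcases List.mem_cons.mp hm with heq | hm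
    · subst heq; exact Hd.thm (Hck.impRefl _ _)
    · exact Hd.mp (Hd.thm (Hck.imp1 _ _)) (Hd.hyp hm)
  | thm ht => exact Hd.mp (Hd.thm (Hck.imp1 _ _)) (Hd.thm ht)
  | mp _ _ ih1 ih2 => exact Hd.mp (Hd.mp (Hd.thm (Hck.imp2 _ _ _)) ih1) ih2

theorem Hd.toHck {X : Set Ax} {A : Formula} (h : Hd X [] A) : Hck X A := by
  induction h with
  | hyp hm => simp at hm
  | thm ht => exact ht
  | mp _ _ ih1 ih2 => exact Hck.mp ih1 ih2

/-- hole case: from (L⊃R)⊃(L'⊃R') infer ((Φ∧L)⊃R)⊃((Φ∧L')⊃R'). -/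
theorem holeMono {X : Set Ax} (Φ L R L' R' : Formula)
    (f : Hck X ((L.imp R).imp (L'.imp R'))) :
    Hck X (((Φ.and L).imp R).imp ((Φ.and L').imp R')) := by
  apply Hd.toHck
  apply Hd.ded
  apply Hd.ded
  -- context: [Φ∧L', (Φ∧L)⊃R]
  have hp : Hd X [Φ.and L', (Φ.and L).imp R] (Φ.and L') := Hd.hyp (by simp)
  have hφ : Hd X [Φ.and L', (Φ.and L).imp R] Φ :=
    Hd.mp (Hd.thm (Hck.andE1 _ _)) hp
  have hl' : Hd X [Φ.and L', (Φ.and L).imp R] L' :=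
    Hd.mp (Hd.thm (Hck.andE2 _ _)) hp
  have hlr : Hd X [Φ.and L', (Φ.and L).imp R] (L.imp R) := by
    apply Hd.ded
    have hl : Hd X [L, Φ.and L', (Φ.and L).imp R] L := Hd.hyp (by simp)
    have hp' : Hd X [L, Φ.and L', (Φ.and L).imp R] (Φ.and L') := Hd.hyp (by simp)
    have hφ' : Hd X [L, Φ.and L', (Φ.and L).imp R] Φ :=
      Hd.mp (Hd.thm (Hck.andE1 _ _)) hp'
    have hpair : Hd X [L, Φ.and L', (Φ.and L).imp R] (Φ.and L) :=
      Hd.mp (Hd.mp (Hd.thm (Hck.andI _ _)) hφ') hl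
    have himp : Hd X [L, Φ.and L', (Φ.and L).imp R] ((Φ.and L).imp R) :=
      Hd.hyp (by simp)
    exact Hd.mp himp hpair
  exact Hd.mp (Hd.mp (Hd.thm f) hlr) hl'

/-- cons case: from A⊃B infer (Φ⊃□A)⊃(Φ⊃□B). -/
theorem consMono {X : Set Ax} (Φ A B : Formula)
    (f : Hck X (A.imp B)) :
    Hck X ((Φ.imp A.box).imp (Φ.imp B.box)) := by
  have g : Hck X ((Formula.box A).imp B.box) :=
    Hck.mp (Hck.k1 A B) (Hck.nec f)
  apply Hd.toHck
  apply Hd.ded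
  apply Hd.ded
  have h1 : Hd X [Φ, Φ.imp A.box] (Φ.imp A.box) := Hd.hyp (by simp)
  have h2 : Hd X [Φ, Φ.imp A.box] Φ := Hd.hyp (by simp)
  exact Hd.mp (Hd.thm g) (Hd.mp h1 h2)

/-- Lemma 4.4: for full sequents Δ, Σ and an output context
Γ{ }, if fm(Δ)⊃fm(Σ) is provable in HCK+X then so is fm(Γ{Δ})⊃fm(Γ{Σ}). -/
theorem statement6 (X : Set Ax) (Δ Sg : FullSeq) (Γ : OutCtx)
    (h : Hck X (Δ.fm.imp Sg.fm)) :
    Hck X ((Γ.fillF Δ).fm.imp (Γ.fillF Sg).fm) := by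
  induction Γ with
  | hole Φ =>
    simpa [OutCtx.fillF, FullSeq.fm, LHS.fm] using
      holeMono Φ.fm Δ.L.fm Δ.R.fm Sg.L.fm Sg.R.fm h
  | cons Φ C ih =>
    simpa [OutCtx.fillF, FullSeq.fm, LHS.fm, RHS.fm] using
      consMono Φ.fm ((C.fillF Δ).L.fm.imp (C.fillF Δ).R.fm)
        ((C.fillF Sg).L.fm.imp (C.fillF Sg).R.fm) ih
end

section
/- Let X ⊆ {d,t,b,4,5}, let Δ and Σ be LHS sequents, and let Γ{ } be an input context. If fm(Σ)⊃fm(Δ) is provable in HCK+X, then so is fm(Γ{Δ})⊃fm(Γ{Σ}). -/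
section Helpers

variable {X : Set Ax}

theorem hck_id (A : Formula) : Hck X (A.imp A) :=
  (((Hck.imp2 A (A.imp A) A).mp (Hck.imp1 A (A.imp A))).mp (Hck.imp1 A A))

theorem hck_trans {A B C : Formula} (f : Hck X (A.imp B)) (g : Hck X (B.imp C)) :
    Hck X (A.imp C) :=
  ((Hck.imp2 A B C).mp ((Hck.imp1 (B.imp C) A).mp g)).mp f

theorem hck_bcomb (A B C : Formula) :
    Hck X ((B.imp C).imp ((A.imp B).imp (A.imp C))) :=
  hck_trans (Hck.imp1 (B.imp C) A) (Hck.imp2 A B C)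

theorem hck_imp_mono_right {A B : Formula} (Φ : Formula) (f : Hck X (A.imp B)) :
    Hck X ((Φ.imp A).imp (Φ.imp B)) :=
  (hck_bcomb Φ A B).mp f

theorem hck_swap_mp {P Q S : Formula} (f : Hck X (P.imp (Q.imp S))) (q : Hck X Q) :
    Hck X (P.imp S) :=
  ((Hck.imp2 P Q S).mp f).mp ((Hck.imp1 Q P).mp q)

theorem hck_imp_anti {C A R : Formula} (g : Hck X (C.imp A)) :
    Hck X ((A.imp R).imp (C.imp R)) :=
  hck_swap_mp (hck_bcomb C A R) g

theorem hck_and_mono {A A' B B' : Formula}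
    (f : Hck X (A.imp A')) (g : Hck X (B.imp B')) :
    Hck X ((A.and B).imp (A'.and B')) := by
  have h1 : Hck X ((A.and B).imp A') := hck_trans (Hck.andE1 A B) f
  have h2 : Hck X ((A.and B).imp B') := hck_trans (Hck.andE2 A B) g
  have h3 : Hck X ((A.and B).imp (B'.imp (A'.and B'))) := hck_trans h1 (Hck.andI A' B')
  exact ((Hck.imp2 (A.and B) B' (A'.and B')).mp h3).mp h2

theorem hck_box_mono {A B : Formula} (f : Hck X (A.imp B)) :
    Hck X ((A.box).imp (B.box)) :=
  (Hck.k1 A B).mp (Hck.nec f)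

theorem hck_dia_mono {A B : Formula} (f : Hck X (A.imp B)) :
    Hck X ((A.dia).imp (B.dia)) :=
  (Hck.k2 A B).mp (Hck.nec f)

theorem fillL_mono (C : OutCtx) {Δ Sg : LHS} (h : Hck X (Sg.fm.imp Δ.fm)) :
    Hck X ((C.fillL Sg).fm.imp (C.fillL Δ).fm) := by
  induction C with
  | hole Φ => exact hck_and_mono (hck_id Φ.fm) h
  | cons Φ C ih => exact hck_and_mono (hck_id Φ.fm) (hck_dia_mono ih)

theorem fillF_anti (C : OutCtx) {L L' : LHS} {R : RHS}
    (h : Hck X (L'.fm.imp L.fm)) :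
    Hck X ((C.fillF ⟨L, R⟩).fm.imp (C.fillF ⟨L', R⟩).fm) := by
  induction C with
  | hole Φ => exact hck_imp_anti (hck_and_mono (hck_id Φ.fm) h)
  | cons Φ C ih =>
      exact hck_imp_mono_right Φ.fm (hck_box_mono ih)

end Helpers

/-- Lemma 4.5: for LHS sequents Δ, Σ and an input context Γ{ },
if fm(Σ)⊃fm(Δ) is provable in HCK+X then so is fm(Γ{Δ})⊃fm(Γ{Σ}). -/
theorem statement7 (X : Set Ax) (Δ Sg : LHS) (Γ : InCtx)
    (h : Hck X (Sg.fm.imp Δ.fm)) :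
    Hck X ((Γ.fill Δ).fm.imp (Γ.fill Sg).fm) :=
  fillF_anti Γ.outer (fillL_mono Γ.inner h)
end
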